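/- arXiv:2305.12957 — 2 statements merged into one kernel-verified Lean document; each statement's English description precedes it below -/
import Mathlib

section
/- Under the conditions of the inexact Frank-Wolfe descent step, iterating k times at fixed loss F with constant step size α yields F(x^{k+1}) − F(x*) ≤ (1 − α)^k (F(x^1) − F(x*)) + 2αM ∑_{l=1}^k e_l + (αG M²)/2 · M', where e_l is the gradient error at inner step l and M' collects the curvature constant. -/
open Finset in
theorem stmt_7 (d : ℕ)
    (F : EuclideanSpace ℝ (Fin d) → ℝ) (x : ℕ → EuclideanSpace ℝ (Fin d))
    (Fstar : ℝ) (e : ℕ → ℝ) (α M G M' : ℝ) (k : ℕ)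
    (hα0 : 0 < α) (hα1 : α ≤ 1) (hM : 0 ≤ M) (hG : 0 ≤ G) (hM' : 1 ≤ M')
    (he : ∀ l, 0 ≤ e l)
    (hgap : ∀ l, Fstar ≤ F (x l))
    (hrec : ∀ l, 1 ≤ l → l ≤ k →
      F (x (l + 1)) - Fstar ≤
        (1 - α) * (F (x l) - Fstar) + 2 * α * M * e l + α ^ 2 * G * M ^ 2 / 2) :
    F (x (k + 1)) - Fstar ≤
      (1 - α) ^ k * (F (x 1) - Fstar) + 2 * α * M * (∑ l ∈ Finset.Icc 1 k, e l)
        + α * G * M ^ 2 / 2 * M' := by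
  induction k with
  | zero =>
      show F (x 1) - Fstar ≤ _
      simp only [pow_zero, one_mul, Finset.Icc_eq_empty_of_lt (by norm_num : (0:ℕ) < 1),
        Finset.sum_empty, mul_zero, add_zero]
      have : 0 ≤ α * G * M ^ 2 / 2 * M' := mul_nonneg (by positivity) (by linarith)
      linarith
  | succ n ih =>
      have ih' := ih (fun l hl hl' => hrec l hl (by omega))
      have h := hrec (n + 1) (by omega) le_rfl
      have h1α : (0:ℝ) ≤ 1 - α := by linarith
      have hpow : (0:ℝ) ≤ (1 - α) ^ n := pow_nonneg h1α n
      have hsum : 0 ≤ ∑ l ∈ Finset.Icc 1 n, e l :=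
        Finset.sum_nonneg fun l _ => he l
      have hsucc : ∑ l ∈ Finset.Icc 1 (n + 1), e l
          = (∑ l ∈ Finset.Icc 1 n, e l) + e (n + 1) :=
        Finset.sum_Icc_succ_top (by omega) e
      have hA : 0 ≤ F (x 1) - Fstar := by linarith [hgap 1]
      rw [hsucc, pow_succ]
      have key := mul_le_mul_of_nonneg_left ih' h1α
      have h2 : 0 ≤ α ^ 2 * G * M ^ 2 * (M' - 1) := mul_nonneg (by positivity) (by linarith)
      have h3 : 0 ≤ α * (2 * α * M * ∑ l ∈ Finset.Icc 1 n, e l) := by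
        apply mul_nonneg hα0.le
        apply mul_nonneg (by positivity) hsum
      nlinarith [key, h2, h3, he (n+1)]
end

section
/- Let F be convex and differentiable on convex compact X, g ∈ R^d, v = argmin_{u∈X} ⟨u, g⟩, x ∈ X, x* a minimizer of F over X, and M the diameter of X. Then ⟨∇F(x), v − x⟩ ≤ 2M‖∇F(x) − g‖ + F(x*) − F(x). -/
open RealInnerProductSpace in
theorem stmt_15 (d : ℕ) (X : Set (EuclideanSpace ℝ (Fin d))) (hXconv : Convex ℝ X)
    (hXcomp : IsCompact X)
    (F : EuclideanSpace ℝ (Fin d) → ℝ)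
    (gradF : EuclideanSpace ℝ (Fin d) → EuclideanSpace ℝ (Fin d)) (M : ℝ)
    (hdiam : ∀ x ∈ X, ∀ z ∈ X, ‖x - z‖ ≤ M)
    (hconvex : ∀ x ∈ X, ∀ z ∈ X, F z + ⟪gradF z, x - z⟫ ≤ F x)
    (g x v xstar : EuclideanSpace ℝ (Fin d))
    (hx : x ∈ X) (hv : v ∈ X)
    (hvmin : ∀ u ∈ X, ⟪v, g⟫ ≤ ⟪u, g⟫)
    (hxstar : xstar ∈ X) (hxstarmin : ∀ u ∈ X, F xstar ≤ F u) :
    ⟪gradF x, v - x⟫ ≤ 2 * M * ‖gradF x - g‖ + F xstar - F x := by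
  have h1 : ⟪gradF x, v - x⟫ = ⟪gradF x - g, v - x⟫ + ⟪g, v - x⟫ := by
    rw [inner_sub_left]; ring
  have h2 : ⟪g, v - x⟫ ≤ ⟪g, xstar - x⟫ := by
    rw [inner_sub_right, inner_sub_right, real_inner_comm v g, real_inner_comm xstar g]
    have := hvmin xstar hxstar
    linarith
  have h3 : ⟪g, xstar - x⟫ = ⟪gradF x, xstar - x⟫ - ⟪gradF x - g, xstar - x⟫ := by
    rw [inner_sub_left]; ring
  have h4 : ⟪gradF x, xstar - x⟫ ≤ F xstar - F x := by
    have := hconvex xstar hxstar x hx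
    linarith
  have cs1 : ⟪gradF x - g, v - x⟫ ≤ M * ‖gradF x - g‖ := by
    calc ⟪gradF x - g, v - x⟫ ≤ ‖gradF x - g‖ * ‖v - x‖ := real_inner_le_norm _ _
    _ ≤ ‖gradF x - g‖ * M := by
        exact mul_le_mul_of_nonneg_left (hdiam v hv x hx) (norm_nonneg _)
    _ = M * ‖gradF x - g‖ := mul_comm _ _
  have cs2 : -⟪gradF x - g, xstar - x⟫ ≤ M * ‖gradF x - g‖ := by
    calc -⟪gradF x - g, xstar - x⟫ = ⟪gradF x - g, -(xstar - x)⟫ := by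
          rw [inner_neg_right]
    _ ≤ ‖gradF x - g‖ * ‖-(xstar - x)‖ := real_inner_le_norm _ _
    _ = ‖gradF x - g‖ * ‖xstar - x‖ := by rw [norm_neg]
    _ ≤ ‖gradF x - g‖ * M := mul_le_mul_of_nonneg_left (hdiam xstar hxstar x hx) (norm_nonneg _)
    _ = M * ‖gradF x - g‖ := mul_comm _ _
  linarith
end
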